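/- arXiv:2504.00830 — 2 statements merged into one kernel-verified Lean document; each statement's English description precedes it below -/
import Mathlib

section
/- Let Φ₁ and Φ₂ be bijective growth functions of lower types p₁ and p₂ respectively, and define Φ₃ by Φ₃⁻¹ = Φ₁⁻¹ · Φ₂⁻¹ (pointwise product of the inverse functions). Then Φ₃ is a growth function of lower type r = (1/p₁ + 1/p₂)⁻¹. -/
open MeasureTheory Filter Set

noncomputable section

/-- A growth function: nondecreasing on `[0,∞)`, vanishing at `0`, positive on `(0,∞)`,
tending to `∞`. -/
def GrowthFunction (Φ : ℝ → ℝ) : Prop :=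
  MonotoneOn Φ (Set.Ici 0) ∧ Φ 0 = 0 ∧ (∀ t : ℝ, 0 < t → 0 < Φ t) ∧ Tendsto Φ atTop atTop

/-- `Φ` is of lower type `p`. -/
def LowerType (p : ℝ) (Φ : ℝ → ℝ) : Prop :=
  ∃ C : ℝ, 1 ≤ C ∧ ∀ s t : ℝ, 0 < s → s ≤ 1 → 0 ≤ t → Φ (s * t) ≤ C * s ^ p * Φ t

/-- `Φ` is of upper type `q`. -/
def UpperType (q : ℝ) (Φ : ℝ → ℝ) : Prop :=
  ∃ C : ℝ, 1 ≤ C ∧ ∀ s t : ℝ, 1 ≤ s → 0 ≤ t → Φ (s * t) ≤ C * s ^ q * Φ t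

/-- Equivalence of growth functions: `c⁻¹Φ₁(c⁻¹t) ≤ Φ₂(t) ≤ cΦ₁(ct)`. -/
def EquivGrowth (Φ₁ Φ₂ : ℝ → ℝ) : Prop :=
  ∃ c : ℝ, 0 < c ∧ ∀ t : ℝ, 0 < t →
    c⁻¹ * Φ₁ (c⁻¹ * t) ≤ Φ₂ t ∧ Φ₂ t ≤ c * Φ₁ (c * t)

/-- The open unit disc in `ℂ`. -/
def unitDisc : Set ℂ := {z : ℂ | ‖z‖ < 1}

/-- Mean Orlicz integral `(1/2π)∫₀^{2π} Φ(|g(θ)|/λ)dθ` over the circle. -/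
def orliczMean (Φ : ℝ → ℝ) (g : ℝ → ℝ) (lam : ℝ) : ℝ :=
  (1 / (2 * Real.pi)) * ∫ θ in (0:ℝ)..(2 * Real.pi), Φ (|g θ| / lam)

/-- The set of admissible constants in the Luxemburg norm. -/
def luxSet (Φ : ℝ → ℝ) (g : ℝ → ℝ) : Set ℝ := {lam | 0 < lam ∧ orliczMean Φ g lam ≤ 1}

/-- The Luxemburg norm of (the modulus of) a function on the circle. -/
def luxNorm (Φ : ℝ → ℝ) (g : ℝ → ℝ) : ℝ := sInf (luxSet Φ g)

/-- Membership in the Orlicz space `L^Φ(𝕋)`. -/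
def MemOrlicz (Φ : ℝ → ℝ) (g : ℝ → ℝ) : Prop := (luxSet Φ g).Nonempty

/-- The modulus of the dilate `G_r` on the circle. -/
def circleDil (G : ℂ → ℂ) (r : ℝ) : ℝ → ℝ :=
  fun θ => ‖G ((r : ℂ) * Complex.exp (θ * Complex.I))‖

/-- Admissible constants for the Hardy–Orlicz Luxemburg norm. -/
def hardySet (Φ : ℝ → ℝ) (G : ℂ → ℂ) : Set ℝ :=
  {lam | 0 < lam ∧ ∀ r : ℝ, 0 ≤ r → r < 1 → orliczMean Φ (circleDil G r) lam ≤ 1}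

/-- The Hardy–Orlicz Luxemburg norm `‖G‖_{H^Φ}^{lux}`. -/
def hardyNorm (Φ : ℝ → ℝ) (G : ℂ → ℂ) : ℝ := sInf (hardySet Φ G)

/-- Membership in the Hardy–Orlicz space `H^Φ(𝔻)`. -/
def MemHardyOrlicz (Φ : ℝ → ℝ) (G : ℂ → ℂ) : Prop :=
  DifferentiableOn ℂ G unitDisc ∧ (hardySet Φ G).Nonempty

/-- `g` is the a.e. radial boundary function of `G`. -/
def IsBoundaryFun (G : ℂ → ℂ) (g : ℝ → ℂ) : Prop :=
  ∀ᵐ (θ : ℝ) ∂(volume.restrict (Set.Ioc 0 (2 * Real.pi))),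
    Tendsto (fun r : ℝ => G ((r : ℂ) * Complex.exp (θ * Complex.I)))
      (nhdsWithin 1 (Set.Iio 1)) (nhds (g θ))

/-- Membership in the classical Hardy space `H^s(𝔻)`, `0<s<∞`. -/
def MemHardy (s : ℝ) (G : ℂ → ℂ) : Prop :=
  DifferentiableOn ℂ G unitDisc ∧
    ∃ M : ℝ, ∀ r : ℝ, 0 ≤ r → r < 1 →
      (∫ θ in (0:ℝ)..(2 * Real.pi), (circleDil G r θ) ^ s) ≤ M

/-- Auxiliary: basic facts about the inverse of a strictly monotone function on `[0,∞)`. -/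
lemma aux_inv_facts {Φ Φinv : ℝ → ℝ}
    (hmono : StrictMonoOn Φ (Set.Ici 0)) (hΦ0 : Φ 0 = 0)
    (hnn : ∀ t : ℝ, 0 ≤ t → 0 ≤ Φinv t)
    (hinv : ∀ t : ℝ, 0 ≤ t → Φ (Φinv t) = t ∧ Φinv (Φ t) = t) :
    Φinv 0 = 0 ∧ StrictMonoOn Φinv (Set.Ici 0) ∧ ContinuousOn Φinv (Set.Ici 0) := by
  have hΦnn : ∀ t : ℝ, 0 ≤ t → 0 ≤ Φ t := by
    intro t ht
    have := hmono.monotoneOn (self_mem_Ici) (ht : t ∈ Set.Ici 0) ht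
    rwa [hΦ0] at this
  have hinv0 : Φinv 0 = 0 := by
    have h := (hinv 0 le_rfl).2
    rwa [hΦ0] at h
  have hsm : StrictMonoOn Φinv (Set.Ici 0) := by
    intro a ha b hb hab
    by_contra hle
    push_neg at hle
    have h1 := hmono.monotoneOn (hnn b hb) (hnn a ha) hle
    rw [(hinv a ha).1, (hinv b hb).1] at h1
    exact absurd hab (not_lt.mpr h1)
  refine ⟨hinv0, hsm, ?_⟩
  have hsurj : ∀ y : ℝ, 0 ≤ y → ∃ x ∈ Set.Ici (0:ℝ), Φinv x = y := by
    intro y hy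
    exact ⟨Φ y, hΦnn y hy, (hinv y hy).2⟩
  intro a ha
  rcases (Set.mem_Ici.mp ha).eq_or_lt with rfl | hpos
  · refine StrictMonoOn.continuousWithinAt_right_of_surjOn hsm self_mem_nhdsWithin ?_
    intro y hy
    rw [hinv0] at hy
    obtain ⟨x, hx, hxy⟩ := hsurj y (le_of_lt hy)
    exact ⟨x, hx, hxy⟩
  · have hfa : 0 < Φinv a := by
      have := hsm self_mem_Ici (le_of_lt hpos : a ∈ Set.Ici 0) hpos
      rwa [hinv0] at this
    have himg : Φinv '' Set.Ici 0 ∈ nhds (Φinv a) := by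
      refine Filter.mem_of_superset (Ici_mem_nhds hfa) ?_
      intro y hy
      obtain ⟨x, hx, hxy⟩ := hsurj y hy
      exact ⟨x, hx, hxy⟩
    exact (hsm.continuousAt_of_image_mem_nhds (Ici_mem_nhds hpos) himg).continuousWithinAt

/-- Auxiliary: the inverse of a function of lower type `p` is of upper type `1/p`,
with constant `C^(1/p)`. -/
lemma aux_upper_of_lower {Φ Φinv : ℝ → ℝ} {p C : ℝ}
    (hmonoinv : StrictMonoOn Φinv (Set.Ici 0))
    (hΦnn : ∀ t : ℝ, 0 ≤ t → 0 ≤ Φ t)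
    (hnn : ∀ t : ℝ, 0 ≤ t → 0 ≤ Φinv t)
    (hinv : ∀ t : ℝ, 0 ≤ t → Φ (Φinv t) = t ∧ Φinv (Φ t) = t)
    (hp : 0 < p) (hC : 1 ≤ C)
    (hlow : ∀ s t : ℝ, 0 < s → s ≤ 1 → 0 ≤ t → Φ (s * t) ≤ C * s ^ p * Φ t)
    (u t : ℝ) (hu : 1 ≤ u) (ht : 0 ≤ t) :
    Φinv (u * t) ≤ (C ^ (1/p) * u ^ (1/p)) * Φinv t := by
  have hC0 : (0:ℝ) < C := lt_of_lt_of_le one_pos hC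
  have hu0 : (0:ℝ) < u := lt_of_lt_of_le one_pos hu
  set a := Φinv t with ha_def
  have ha : 0 ≤ a := hnn t ht
  set K := C ^ (1/p) * u ^ (1/p) with hK_def
  have hK1 : (1:ℝ) ≤ K := by
    have h1 : (1:ℝ) ≤ C ^ (1/p) := by
      calc (1:ℝ) = 1 ^ (1/p) := (Real.one_rpow _).symm
        _ ≤ C ^ (1/p) := Real.rpow_le_rpow zero_le_one hC (by positivity)
    have h2 : (1:ℝ) ≤ u ^ (1/p) := by
      calc (1:ℝ) = 1 ^ (1/p) := (Real.one_rpow _).symm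
        _ ≤ u ^ (1/p) := Real.rpow_le_rpow zero_le_one hu (by positivity)
    calc (1:ℝ) = 1 * 1 := (one_mul 1).symm
      _ ≤ C ^ (1/p) * u ^ (1/p) := mul_le_mul h1 h2 zero_le_one (by positivity)
  have hK0 : (0:ℝ) < K := lt_of_lt_of_le one_pos hK1
  have hKp : K ^ p = C * u := by
    rw [hK_def, Real.mul_rpow (by positivity) (by positivity),
      ← Real.rpow_mul hC0.le, ← Real.rpow_mul hu0.le,
      one_div_mul_cancel hp.ne', Real.rpow_one, Real.rpow_one]
  have key := hlow K⁻¹ (K * a) (by positivity) (inv_le_one_of_one_le₀ hK1) (by positivity)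
  rw [inv_mul_cancel_left₀ hK0.ne'] at key
  have hΦa : Φ a = t := (hinv t ht).1
  rw [hΦa, Real.inv_rpow hK0.le, hKp] at key
  -- key : t ≤ C * (C * u)⁻¹ * Φ (K * a)
  have hcoef : C * (C * u)⁻¹ = u⁻¹ := by
    field_simp
  rw [hcoef] at key
  have hut : u * t ≤ Φ (K * a) := by
    rw [inv_mul_eq_div, le_div_iff₀ hu0] at key
    linarith [key]
  have h1 : Φinv (u * t) ≤ Φinv (Φ (K * a)) := by
    refine hmonoinv.monotoneOn ?_ ?_ hut
    · exact mul_nonneg hu0.le ht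
    · exact hΦnn (K * a) (by positivity)
  rwa [(hinv (K * a) (by positivity)).2] at h1

/-- if `Φ₃⁻¹ = Φ₁⁻¹·Φ₂⁻¹` with `Φ₁, Φ₂` bijective growth functions of lower
types `p₁, p₂`, then `Φ₃` is a growth function of lower type `(1/p₁ + 1/p₂)⁻¹`. -/
theorem lowerType_of_inverse_product (Φ₁ Φ₂ Φ₃ Φ₁inv Φ₂inv : ℝ → ℝ) (p₁ p₂ : ℝ)
    (h₁ : GrowthFunction Φ₁) (h₂ : GrowthFunction Φ₂)
    (hmono₁ : StrictMonoOn Φ₁ (Set.Ici 0)) (hmono₂ : StrictMonoOn Φ₂ (Set.Ici 0))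
    (hcont₁ : ContinuousOn Φ₁ (Set.Ici 0)) (hcont₂ : ContinuousOn Φ₂ (Set.Ici 0))
    (hp₁ : 0 < p₁) (hp₂ : 0 < p₂)
    (hlow₁ : LowerType p₁ Φ₁) (hlow₂ : LowerType p₂ Φ₂)
    (hinv₁nn : ∀ t : ℝ, 0 ≤ t → 0 ≤ Φ₁inv t) (hinv₂nn : ∀ t : ℝ, 0 ≤ t → 0 ≤ Φ₂inv t)
    (hinv₁ : ∀ t : ℝ, 0 ≤ t → Φ₁ (Φ₁inv t) = t ∧ Φ₁inv (Φ₁ t) = t)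
    (hinv₂ : ∀ t : ℝ, 0 ≤ t → Φ₂ (Φ₂inv t) = t ∧ Φ₂inv (Φ₂ t) = t)
    (hΦ₃ : ∀ t : ℝ, 0 ≤ t → Φ₃ (Φ₁inv t * Φ₂inv t) = t)
    (hΦ₃' : ∀ t : ℝ, 0 ≤ t → Φ₁inv (Φ₃ t) * Φ₂inv (Φ₃ t) = t) :
    GrowthFunction Φ₃ ∧ LowerType (1 / p₁ + 1 / p₂)⁻¹ Φ₃ := by
  obtain ⟨hm₁, h10, hpos₁, -⟩ := h₁
  obtain ⟨hm₂, h20, hpos₂, -⟩ := h₂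
  have hΦ₁nn : ∀ t : ℝ, 0 ≤ t → 0 ≤ Φ₁ t := by
    intro t ht
    rcases ht.eq_or_lt with rfl | h
    · rw [h10]
    · exact (hpos₁ t h).le
  have hΦ₂nn : ∀ t : ℝ, 0 ≤ t → 0 ≤ Φ₂ t := by
    intro t ht
    rcases ht.eq_or_lt with rfl | h
    · rw [h20]
    · exact (hpos₂ t h).le
  obtain ⟨hinv₁0, hsm₁, hcinv₁⟩ := aux_inv_facts hmono₁ h10 hinv₁nn hinv₁
  obtain ⟨hinv₂0, hsm₂, hcinv₂⟩ := aux_inv_facts hmono₂ h20 hinv₂nn hinv₂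
  set ψ : ℝ → ℝ := fun t => Φ₁inv t * Φ₂inv t with hψ_def
  have hψ0 : ψ 0 = 0 := by simp [hψ_def, hinv₁0]
  have hψnn : ∀ t : ℝ, 0 ≤ t → 0 ≤ ψ t := fun t ht =>
    mul_nonneg (hinv₁nn t ht) (hinv₂nn t ht)
  have hψsm : StrictMonoOn ψ (Set.Ici 0) := by
    intro a ha b hb hab
    have h1 : Φ₁inv a < Φ₁inv b := hsm₁ ha hb hab
    have h2 : Φ₂inv a ≤ Φ₂inv b := (hsm₂.monotoneOn) ha hb hab.le
    have hb2 : 0 < Φ₂inv b := by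
      have := hsm₂ self_mem_Ici hb (lt_of_le_of_lt ha hab)
      rwa [hinv₂0] at this
    calc ψ a = Φ₁inv a * Φ₂inv a := rfl
      _ ≤ Φ₁inv a * Φ₂inv b := mul_le_mul_of_nonneg_left h2 (hinv₁nn a ha)
      _ < Φ₁inv b * Φ₂inv b := mul_lt_mul_of_pos_right h1 hb2
  have hψcont : ContinuousOn ψ (Set.Ici 0) := hcinv₁.mul hcinv₂
  -- surjectivity of ψ on [0, ∞)
  have hψsurj : ∀ t : ℝ, 0 ≤ t → ∃ s : ℝ, 0 ≤ s ∧ ψ s = t := by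
    intro t ht
    set c : ℝ := max t 1 with hc_def
    have hc1 : (1:ℝ) ≤ c := le_max_right _ _
    have hc0 : (0:ℝ) ≤ c := le_trans zero_le_one hc1
    set b : ℝ := max (Φ₁ c) (Φ₂ c) with hb_def
    have hb0 : (0:ℝ) ≤ b := le_trans (hΦ₁nn c hc0) (le_max_left _ _)
    have hcb : t ≤ ψ b := by
      have h1 : c ≤ Φ₁inv b := by
        have := (hsm₁.monotoneOn) (hΦ₁nn c hc0 : Φ₁ c ∈ Set.Ici 0) (hb0 : b ∈ Set.Ici 0)
          (le_max_left _ _)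
        rwa [(hinv₁ c hc0).2] at this
      have h2 : c ≤ Φ₂inv b := by
        have := (hsm₂.monotoneOn) (hΦ₂nn c hc0 : Φ₂ c ∈ Set.Ici 0) (hb0 : b ∈ Set.Ici 0)
          (le_max_right _ _)
        rwa [(hinv₂ c hc0).2] at this
      have : c * c ≤ Φ₁inv b * Φ₂inv b :=
        mul_le_mul h1 h2 hc0 (le_trans hc0 h1)
      have htc : t ≤ c * c := by
        calc t ≤ c := le_max_left _ _
          _ = c * 1 := (mul_one c).symm
          _ ≤ c * c := mul_le_mul_of_nonneg_left hc1 hc0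
      exact le_trans htc this
    have hIcc : Set.Icc (ψ 0) (ψ b) ⊆ ψ '' Set.Icc 0 b := by
      refine intermediate_value_Icc hb0 (hψcont.mono ?_)
      exact Icc_subset_Ici_self
    have hmem : t ∈ Set.Icc (ψ 0) (ψ b) := by
      rw [hψ0]; exact ⟨ht, hcb⟩
    obtain ⟨s, hs, hst⟩ := hIcc hmem
    exact ⟨s, hs.1, hst⟩
  have hΦ₃nn : ∀ t : ℝ, 0 ≤ t → 0 ≤ Φ₃ t := by
    intro t ht
    obtain ⟨s, hs0, hst⟩ := hψsurj t ht
    have : Φ₃ t = s := by rw [← hst]; exact hΦ₃ s hs0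
    rw [this]; exact hs0
  have hψΦ₃ : ∀ t : ℝ, 0 ≤ t → ψ (Φ₃ t) = t := fun t ht => hΦ₃' t ht
  have hΦ₃sm : StrictMonoOn Φ₃ (Set.Ici 0) := by
    intro a ha b hb hab
    by_contra hle
    push_neg at hle
    have h1 := hψsm.monotoneOn (hΦ₃nn b hb) (hΦ₃nn a ha) hle
    rw [hψΦ₃ a ha, hψΦ₃ b hb] at h1
    exact absurd hab (not_lt.mpr h1)
  have hΦ₃0 : Φ₃ 0 = 0 := by
    have := hΦ₃ 0 le_rfl
    rwa [hinv₁0, hinv₂0, mul_zero] at this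
  have hΦ₃pos : ∀ t : ℝ, 0 < t → 0 < Φ₃ t := by
    intro t ht
    have := hΦ₃sm self_mem_Ici ht.le ht
    rwa [hΦ₃0] at this
  have hΦ₃top : Tendsto Φ₃ atTop atTop := by
    rw [tendsto_atTop_atTop]
    intro N
    set m : ℝ := max N 0 with hm_def
    refine ⟨max (ψ m) 1, fun a hamax => ?_⟩
    have ha0 : (0:ℝ) ≤ a := le_trans zero_le_one (le_trans (le_max_right _ _) hamax)
    have hψm0 : 0 ≤ ψ m := hψnn m (le_max_right _ _)
    have h1 : Φ₃ (ψ m) ≤ Φ₃ a :=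
      hΦ₃sm.monotoneOn hψm0 ha0 (le_trans (le_max_left _ _) hamax)
    rw [hΦ₃ m (le_max_right _ _)] at h1
    exact le_trans (le_max_left _ _) h1
  constructor
  · exact ⟨hΦ₃sm.monotoneOn, hΦ₃0, hΦ₃pos, hΦ₃top⟩
  -- Lower type
  obtain ⟨C₁, hC₁, hl₁⟩ := hlow₁
  obtain ⟨C₂, hC₂, hl₂⟩ := hlow₂
  have hU₁ := aux_upper_of_lower hsm₁ hΦ₁nn hinv₁nn hinv₁ hp₁ hC₁ hl₁
  have hU₂ := aux_upper_of_lower hsm₂ hΦ₂nn hinv₂nn hinv₂ hp₂ hC₂ hl₂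
  set q : ℝ := 1 / p₁ + 1 / p₂ with hq_def
  have hq0 : 0 < q := by rw [hq_def]; positivity
  set Cψ : ℝ := C₁ ^ (1/p₁) * C₂ ^ (1/p₂) with hCψ_def
  have hC₁0 : (0:ℝ) < C₁ := lt_of_lt_of_le one_pos hC₁
  have hC₂0 : (0:ℝ) < C₂ := lt_of_lt_of_le one_pos hC₂
  have hCψ1 : (1:ℝ) ≤ Cψ := by
    have h1 : (1:ℝ) ≤ C₁ ^ (1/p₁) := by
      calc (1:ℝ) = 1 ^ (1/p₁) := (Real.one_rpow _).symm
        _ ≤ C₁ ^ (1/p₁) := Real.rpow_le_rpow zero_le_one hC₁ (by positivity)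
    have h2 : (1:ℝ) ≤ C₂ ^ (1/p₂) := by
      calc (1:ℝ) = 1 ^ (1/p₂) := (Real.one_rpow _).symm
        _ ≤ C₂ ^ (1/p₂) := Real.rpow_le_rpow zero_le_one hC₂ (by positivity)
    calc (1:ℝ) = 1 * 1 := (one_mul 1).symm
      _ ≤ _ := mul_le_mul h1 h2 zero_le_one (by positivity)
  have hCψ0 : (0:ℝ) < Cψ := lt_of_lt_of_le one_pos hCψ1
  -- upper type q for ψ
  have hUψ : ∀ u t : ℝ, 1 ≤ u → 0 ≤ t → ψ (u * t) ≤ Cψ * u ^ q * ψ t := by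
    intro u t hu ht
    have hu0 : (0:ℝ) < u := lt_of_lt_of_le one_pos hu
    have h1 := hU₁ u t hu ht
    have h2 := hU₂ u t hu ht
    have hnn1 : 0 ≤ Φ₁inv (u * t) := hinv₁nn _ (by positivity)
    have hnn2 : 0 ≤ Φ₂inv (u * t) := hinv₂nn _ (by positivity)
    calc ψ (u * t) = Φ₁inv (u * t) * Φ₂inv (u * t) := rfl
      _ ≤ ((C₁ ^ (1/p₁) * u ^ (1/p₁)) * Φ₁inv t) * ((C₂ ^ (1/p₂) * u ^ (1/p₂)) * Φ₂inv t) :=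
          mul_le_mul h1 h2 hnn2 (mul_nonneg (by positivity) (hinv₁nn t ht))
      _ = Cψ * (u ^ (1/p₁) * u ^ (1/p₂)) * ψ t := by ring
      _ = Cψ * u ^ q * ψ t := by rw [← Real.rpow_add hu0, hq_def]
  -- conclude lower type of Φ₃
  set D : ℝ := Cψ ^ (1/q) with hD_def
  have hD1 : (1:ℝ) ≤ D := by
    calc (1:ℝ) = 1 ^ (1/q) := (Real.one_rpow _).symm
      _ ≤ Cψ ^ (1/q) := Real.rpow_le_rpow zero_le_one hCψ1 (by positivity)
  have hD0 : (0:ℝ) < D := lt_of_lt_of_le one_pos hD1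
  refine ⟨D, hD1, ?_⟩
  intro s t hs hs1 ht
  set b : ℝ := Φ₃ t with hb_def
  have hb0 : 0 ≤ b := hΦ₃nn t ht
  have htb : ψ b = t := hψΦ₃ t ht
  have hsr0 : (0:ℝ) < s ^ q⁻¹ := Real.rpow_pos_of_pos hs _
  rcases le_or_gt 1 (D * s ^ q⁻¹) with hcase | hcase
  · -- easy case: coefficient at least 1
    have h1 : Φ₃ (s * t) ≤ Φ₃ t := by
      refine hΦ₃sm.monotoneOn (mul_nonneg hs.le ht) ht ?_
      calc s * t ≤ 1 * t := mul_le_mul_of_nonneg_right hs1 ht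
        _ = t := one_mul t
    calc Φ₃ (s * t) ≤ Φ₃ t := h1
      _ = 1 * Φ₃ t := (one_mul _).symm
      _ ≤ D * s ^ q⁻¹ * Φ₃ t := mul_le_mul_of_nonneg_right hcase hb0
  · -- main case
    set u : ℝ := (D * s ^ q⁻¹)⁻¹ with hu_def
    have hDs0 : (0:ℝ) < D * s ^ q⁻¹ := by positivity
    have hu1 : (1:ℝ) ≤ u := ((one_le_inv₀ hDs0).mpr hcase.le)
    set v : ℝ := (D * s ^ q⁻¹) * b with hv_def
    have hv0 : 0 ≤ v := by positivity
    have huv : u * v = b := by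
      rw [hu_def, hv_def, ← mul_assoc, inv_mul_cancel₀ hDs0.ne', one_mul]
    have key : ψ b ≤ Cψ * u ^ q * ψ v := by
      have := hUψ u v hu1 hv0
      rwa [huv] at this
    have hcoef : Cψ * u ^ q = s⁻¹ := by
      rw [hu_def, Real.inv_rpow hDs0.le, Real.mul_rpow hD0.le hsr0.le,
        hD_def, ← Real.rpow_mul hCψ0.le, ← Real.rpow_mul hs.le,
        one_div_mul_cancel hq0.ne', inv_mul_cancel₀ hq0.ne',
        Real.rpow_one, Real.rpow_one, mul_inv]
      rw [← mul_assoc, mul_inv_cancel₀ hCψ0.ne', one_mul]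
    rw [hcoef] at key
    have hsψ : s * ψ b ≤ ψ v := by
      rw [inv_mul_eq_div, le_div_iff₀ hs] at key
      calc s * ψ b = ψ b * s := mul_comm _ _
        _ ≤ ψ v := key
    have h1 : Φ₃ (s * t) ≤ Φ₃ (ψ v) := by
      refine hΦ₃sm.monotoneOn (mul_nonneg hs.le ht) (hψnn v hv0) ?_
      rw [← htb]; exact hsψ
    rw [hΦ₃ v hv0] at h1
    calc Φ₃ (s * t) ≤ v := h1
      _ = D * s ^ q⁻¹ * Φ₃ t := by rw [hv_def]
      _ = D * s ^ (1 / p₁ + 1 / p₂)⁻¹ * Φ₃ t := by rw [hq_def]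
end
end

section
/- Let Φ₁ and Φ₂ be bijective growth functions of lower types p₁, p₂, with Φ₁ additionally of upper type q, and define Φ₃ by Φ₃⁻¹ = Φ₁⁻¹·Φ₂⁻¹. Then Φ₃ is of upper type q, and its lower type r = (1/p₁+1/p₂)⁻¹ satisfies 0 < r ≤ q. -/
open MeasureTheory Filter Set

noncomputable section

private lemma inv_strictMono {Φ Φinv : ℝ → ℝ} (hmono : MonotoneOn Φ (Set.Ici 0))
    (hnn : ∀ t : ℝ, 0 ≤ t → 0 ≤ Φinv t)
    (hinv : ∀ t : ℝ, 0 ≤ t → Φ (Φinv t) = t ∧ Φinv (Φ t) = t) :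
    StrictMonoOn Φinv (Set.Ici 0) := by
  intro a ha b hb hab
  by_contra h
  push_neg at h
  have h2 := hmono (Set.mem_Ici.mpr (hnn b (Set.mem_Ici.mp hb)))
    (Set.mem_Ici.mpr (hnn a (Set.mem_Ici.mp ha))) h
  rw [(hinv a (Set.mem_Ici.mp ha)).1, (hinv b (Set.mem_Ici.mp hb)).1] at h2
  linarith

private lemma inv_contOn {Φ Φinv : ℝ → ℝ}
    (hnn : ∀ t : ℝ, 0 ≤ t → 0 ≤ Φinv t)
    (hsm : StrictMonoOn Φinv (Set.Ici 0))
    (hinv : ∀ t : ℝ, 0 ≤ t → Φ (Φinv t) = t ∧ Φinv (Φ t) = t)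
    (hΦnn : ∀ t : ℝ, 0 ≤ t → 0 ≤ Φ t) :
    ContinuousOn Φinv (Set.Ici 0) := by
  set F : ℝ → ℝ := fun t => if 0 ≤ t then Φinv t else t with hF
  have hmonoF : Monotone F := by
    intro a b hab
    by_cases ha : 0 ≤ a
    · have hb : 0 ≤ b := le_trans ha hab
      simpa [hF, ha, hb] using
        hsm.monotoneOn (Set.mem_Ici.mpr ha) (Set.mem_Ici.mpr hb) hab
    · by_cases hb : 0 ≤ b
      · simp only [hF, ha, hb, if_true, if_false]
        exact le_trans (le_of_lt (lt_of_not_ge ha)) (hnn b hb)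
      · simp [hF, ha, hb, hab]
  have hsurj : Function.Surjective F := by
    intro y
    by_cases hy : 0 ≤ y
    · exact ⟨Φ y, by simp [hF, hΦnn y hy, (hinv y hy).2]⟩
    · exact ⟨y, by simp [hF, hy]⟩
  exact (hmonoF.continuous_of_surjective hsurj).continuousOn.congr
    (fun t ht => by simp [hF, Set.mem_Ici.mp ht])

/-- if moreover `Φ₁` is of upper type `q`, then `Φ₃` (with
`Φ₃⁻¹ = Φ₁⁻¹·Φ₂⁻¹`) is of upper type `q`, and its lower type
`r = (1/p₁ + 1/p₂)⁻¹` satisfies `0 < r ≤ q`. -/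
theorem upperType_of_inverse_product (Φ₁ Φ₂ Φ₃ Φ₁inv Φ₂inv : ℝ → ℝ) (p₁ p₂ q : ℝ)
    (h₁ : GrowthFunction Φ₁) (h₂ : GrowthFunction Φ₂)
    (hmono₁ : StrictMonoOn Φ₁ (Set.Ici 0)) (hmono₂ : StrictMonoOn Φ₂ (Set.Ici 0))
    (hcont₁ : ContinuousOn Φ₁ (Set.Ici 0)) (hcont₂ : ContinuousOn Φ₂ (Set.Ici 0))
    (hp₁ : 0 < p₁) (hp₂ : 0 < p₂)
    (hlow₁ : LowerType p₁ Φ₁) (hlow₂ : LowerType p₂ Φ₂)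
    (hup₁ : UpperType q Φ₁)
    (hinv₁nn : ∀ t : ℝ, 0 ≤ t → 0 ≤ Φ₁inv t) (hinv₂nn : ∀ t : ℝ, 0 ≤ t → 0 ≤ Φ₂inv t)
    (hinv₁ : ∀ t : ℝ, 0 ≤ t → Φ₁ (Φ₁inv t) = t ∧ Φ₁inv (Φ₁ t) = t)
    (hinv₂ : ∀ t : ℝ, 0 ≤ t → Φ₂ (Φ₂inv t) = t ∧ Φ₂inv (Φ₂ t) = t)
    (hΦ₃ : ∀ t : ℝ, 0 ≤ t → Φ₃ (Φ₁inv t * Φ₂inv t) = t)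
    (hΦ₃' : ∀ t : ℝ, 0 ≤ t → Φ₁inv (Φ₃ t) * Φ₂inv (Φ₃ t) = t) :
    UpperType q Φ₃ ∧ LowerType (1 / p₁ + 1 / p₂)⁻¹ Φ₃ ∧
      0 < (1 / p₁ + 1 / p₂)⁻¹ ∧ (1 / p₁ + 1 / p₂)⁻¹ ≤ q := by
  obtain ⟨hm₁, hz₁, hpos₁, -⟩ := h₁
  obtain ⟨hm₂, hz₂, hpos₂, -⟩ := h₂
  have hΦ₁nn : ∀ t : ℝ, 0 ≤ t → 0 ≤ Φ₁ t := by
    intro t ht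
    rcases eq_or_lt_of_le ht with h | h
    · simp [← h, hz₁]
    · exact (hpos₁ t h).le
  have hΦ₂nn : ∀ t : ℝ, 0 ≤ t → 0 ≤ Φ₂ t := by
    intro t ht
    rcases eq_or_lt_of_le ht with h | h
    · simp [← h, hz₂]
    · exact (hpos₂ t h).le
  have hsm₁' : StrictMonoOn Φ₁inv (Set.Ici 0) := inv_strictMono hm₁ hinv₁nn hinv₁
  have hsm₂' : StrictMonoOn Φ₂inv (Set.Ici 0) := inv_strictMono hm₂ hinv₂nn hinv₂
  have hmono₁' : MonotoneOn Φ₁inv (Set.Ici 0) := hsm₁'.monotoneOn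
  have hmono₂' : MonotoneOn Φ₂inv (Set.Ici 0) := hsm₂'.monotoneOn
  have hcont₁' : ContinuousOn Φ₁inv (Set.Ici 0) := inv_contOn hinv₁nn hsm₁' hinv₁ hΦ₁nn
  have hcont₂' : ContinuousOn Φ₂inv (Set.Ici 0) := inv_contOn hinv₂nn hsm₂' hinv₂ hΦ₂nn
  have hinv₁0 : Φ₁inv 0 = 0 := by
    have := (hinv₁ 0 le_rfl).2
    rwa [hz₁] at this
  have hinv₂0 : Φ₂inv 0 = 0 := by
    have := (hinv₂ 0 le_rfl).2
    rwa [hz₂] at this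
  set Ψ : ℝ → ℝ := fun u => Φ₁inv u * Φ₂inv u with hΨdef
  have hΨ0 : Ψ 0 = 0 := by simp [hΨdef, hinv₁0]
  have hΨsm : StrictMonoOn Ψ (Set.Ici 0) := by
    intro a ha b hb hab
    have ha' := Set.mem_Ici.mp ha
    have hb' : (0 : ℝ) < b := lt_of_le_of_lt ha' hab
    have h2pos : 0 < Φ₂inv b := by
      rcases lt_or_eq_of_le (hinv₂nn b hb'.le) with h | h
      · exact h
      · exfalso
        have := (hinv₂ b hb'.le).1
        rw [← h, hz₂] at this
        linarith
    calc Ψ a = Φ₁inv a * Φ₂inv a := rfl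
      _ ≤ Φ₁inv a * Φ₂inv b := by
          exact mul_le_mul_of_nonneg_left
            (hmono₂' ha (Set.mem_Ici.mpr hb'.le) hab.le) (hinv₁nn a ha')
      _ < Φ₁inv b * Φ₂inv b := by
          exact mul_lt_mul_of_pos_right (hsm₁' ha (Set.mem_Ici.mpr hb'.le) hab) h2pos
  -- surjectivity of Ψ on [0,∞) via IVT
  have hsurj : ∀ w : ℝ, 0 ≤ w → ∃ x, 0 ≤ x ∧ Ψ x = w := by
    intro w hw
    set B := Φ₁ w + Φ₂ 1 with hBdef
    have hB : 0 ≤ B := add_nonneg (hΦ₁nn w hw) (hpos₂ 1 one_pos).le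
    have hΨB : w ≤ Ψ B := by
      have h1 : w ≤ Φ₁inv B := by
        have hle : Φ₁ w ≤ B := le_add_of_nonneg_right (hpos₂ 1 one_pos).le
        have := hmono₁' (Set.mem_Ici.mpr (hΦ₁nn w hw)) (Set.mem_Ici.mpr hB) hle
        rwa [(hinv₁ w hw).2] at this
      have h2 : 1 ≤ Φ₂inv B := by
        have hle : Φ₂ 1 ≤ B := le_add_of_nonneg_left (hΦ₁nn w hw)
        have := hmono₂' (Set.mem_Ici.mpr (hΦ₂nn 1 zero_le_one)) (Set.mem_Ici.mpr hB) hle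
        rwa [(hinv₂ 1 zero_le_one).2] at this
      calc w = w * 1 := (mul_one w).symm
        _ ≤ Φ₁inv B * Φ₂inv B := mul_le_mul h1 h2 zero_le_one (hinv₁nn B hB)
    have hΨcont : ContinuousOn Ψ (Set.Icc 0 B) :=
      ((hcont₁'.mul hcont₂').mono (Set.Icc_subset_Ici_self))
    have hsub := intermediate_value_Icc hB hΨcont
    have hw' : w ∈ Set.Icc (Ψ 0) (Ψ B) := ⟨by rw [hΨ0]; exact hw, hΨB⟩
    obtain ⟨x, hx, hxw⟩ := hsub hw'
    exact ⟨x, hx.1, hxw⟩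
  have hΦ₃nn : ∀ w : ℝ, 0 ≤ w → 0 ≤ Φ₃ w := by
    intro w hw
    obtain ⟨x, hx, hxw⟩ := hsurj w hw
    have := hΦ₃ x hx
    rw [show Φ₁inv x * Φ₂inv x = Ψ x from rfl, hxw] at this
    rw [this]; exact hx
  -- key inversion lemma
  have key : ∀ w M : ℝ, 0 ≤ w → 0 ≤ M → w ≤ Ψ M → Φ₃ w ≤ M := by
    intro w M hw hM hwM
    by_contra h
    push_neg at h
    have := hΨsm (Set.mem_Ici.mpr hM) (Set.mem_Ici.mpr (hΦ₃nn w hw)) h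
    rw [show Ψ (Φ₃ w) = Φ₁inv (Φ₃ w) * Φ₂inv (Φ₃ w) from rfl, hΦ₃' w hw] at this
    linarith
  obtain ⟨C', hC'1, hC'⟩ := hup₁
  obtain ⟨C₁, hC₁1, hC₁⟩ := hlow₁
  obtain ⟨C₂, hC₂1, hC₂⟩ := hlow₂
  -- Step A : p₁ ≤ q
  have hq : p₁ ≤ q := by
    by_contra hlt
    push_neg at hlt
    set K := C₁ * C' with hKdef
    have hK1 : 1 ≤ K := le_trans hC₁1 (le_mul_of_one_le_right (by linarith) hC'1)
    set s := (K + 1) ^ ((p₁ - q)⁻¹) with hsdef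
    have hs1 : 1 ≤ s := Real.one_le_rpow (by linarith) (inv_nonneg.mpr (by linarith))
    have hspos : (0:ℝ) < s := lt_of_lt_of_le one_pos hs1
    have hsexp : s ^ (p₁ - q) = K + 1 := by
      rw [hsdef, ← Real.rpow_mul (by linarith : (0:ℝ) ≤ K + 1),
        inv_mul_cancel₀ (by linarith : p₁ - q ≠ 0), Real.rpow_one]
    have h1 := hC₁ s⁻¹ s (by positivity) (inv_le_one_of_one_le₀ hs1) hspos.le
    rw [inv_mul_cancel₀ hspos.ne'] at h1
    have h2 := hC' s 1 hs1 zero_le_one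
    rw [mul_one] at h2
    have hA : (0:ℝ) < s ^ p₁ := Real.rpow_pos_of_pos hspos _
    have hBq : (0:ℝ) < s ^ q := Real.rpow_pos_of_pos hspos _
    have hΦ11 : (0:ℝ) < Φ₁ 1 := hpos₁ 1 one_pos
    have hiq : s⁻¹ ^ p₁ = (s ^ p₁)⁻¹ := Real.inv_rpow hspos.le p₁
    rw [hiq] at h1
    have hΦ₁s : 0 ≤ Φ₁ s := hΦ₁nn s hspos.le
    -- Φ₁ 1 ≤ C₁ * (s^p₁)⁻¹ * Φ₁ s and Φ₁ s ≤ C' * s^q * Φ₁ 1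
    have hcomb : Φ₁ 1 * s ^ p₁ ≤ K * s ^ q * Φ₁ 1 := by
      have h3 : Φ₁ 1 ≤ C₁ * (s ^ p₁)⁻¹ * (C' * s ^ q * Φ₁ 1) := by
        refine le_trans h1 ?_
        have := mul_le_mul_of_nonneg_left h2 (by positivity : (0:ℝ) ≤ C₁ * (s ^ p₁)⁻¹)
        linarith [this]
      have h4 := mul_le_mul_of_nonneg_right h3 hA.le
      calc Φ₁ 1 * s ^ p₁ ≤ C₁ * (s ^ p₁)⁻¹ * (C' * s ^ q * Φ₁ 1) * s ^ p₁ := h4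
        _ = K * s ^ q * Φ₁ 1 * ((s ^ p₁)⁻¹ * s ^ p₁) := by ring
        _ = K * s ^ q * Φ₁ 1 := by rw [inv_mul_cancel₀ hA.ne', mul_one]
    have hcomb' : s ^ p₁ * Φ₁ 1 ≤ (K * s ^ q) * Φ₁ 1 := by linarith [hcomb]
    have hfin : s ^ p₁ ≤ K * s ^ q := le_of_mul_le_mul_right hcomb' hΦ11
    have hsub : s ^ (p₁ - q) = s ^ p₁ / s ^ q := Real.rpow_sub hspos _ _
    rw [hsexp] at hsub
    have : s ^ p₁ = (K + 1) * s ^ q := by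
      field_simp at hsub
      linarith [hsub]
    nlinarith [hBq]
  have hqpos : 0 < q := lt_of_lt_of_le hp₁ hq
  have hrpos : 0 < (1 / p₁ + 1 / p₂)⁻¹ := by positivity
  have hrq : (1 / p₁ + 1 / p₂)⁻¹ ≤ q := by
    refine le_trans ?_ hq
    have h5 : 1 / p₁ ≤ 1 / p₁ + 1 / p₂ := le_add_of_nonneg_right (by positivity)
    have h6 := inv_anti₀ (show (0:ℝ) < 1 / p₁ by positivity) h5
    simpa using h6
  set r := (1 / p₁ + 1 / p₂)⁻¹ with hrdef
  have hrmul : r / p₁ + r / p₂ = 1 := by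
    have hsum : (0:ℝ) < 1 / p₁ + 1 / p₂ := by positivity
    rw [hrdef, one_div_add_one_div hp₁.ne' hp₂.ne', inv_div, div_div, div_div,
      div_add_div _ _ (by positivity) (by positivity), div_eq_one_iff_eq (by positivity)]
    ring
  refine ⟨⟨C', hC'1, ?_⟩, ⟨max C₁ C₂, le_max_of_le_left hC₁1, ?_⟩, hrpos, hrq⟩
  · -- upper type q for Φ₃
    intro s t hs ht
    have hspos : (0:ℝ) < s := lt_of_lt_of_le one_pos hs
    set u := Φ₃ t with hudef
    have hu : 0 ≤ u := hΦ₃nn t ht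
    have hsq1 : 1 ≤ s ^ q := by
      have := Real.rpow_le_rpow_of_exponent_le hs (le_of_lt hqpos)
      rwa [Real.rpow_zero] at this
    set M := C' * s ^ q * u with hMdef
    have hM : 0 ≤ M := by positivity
    refine key (s * t) M (by positivity) hM ?_
    have claim1 : s * Φ₁inv u ≤ Φ₁inv M := by
      have h3 := hC' s (Φ₁inv u) hs (hinv₁nn u hu)
      rw [(hinv₁ u hu).1] at h3
      have h4 := hmono₁' (Set.mem_Ici.mpr (hΦ₁nn _ (mul_nonneg hspos.le (hinv₁nn u hu))))
        (Set.mem_Ici.mpr hM) h3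
      rwa [(hinv₁ (s * Φ₁inv u) (mul_nonneg hspos.le (hinv₁nn u hu))).2] at h4
    have claim2 : Φ₂inv u ≤ Φ₂inv M := by
      have huM : u ≤ M := by
        calc u = 1 * 1 * u := by ring
          _ ≤ C' * s ^ q * u := by
              exact mul_le_mul_of_nonneg_right
                (mul_le_mul hC'1 hsq1 zero_le_one (by linarith)) hu
      exact hmono₂' (Set.mem_Ici.mpr hu) (Set.mem_Ici.mpr hM) huM
    have hprod : (s * Φ₁inv u) * Φ₂inv u ≤ Φ₁inv M * Φ₂inv M :=
      mul_le_mul claim1 claim2 (hinv₂nn u hu) (hinv₁nn M hM)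
    have ht' : Φ₁inv u * Φ₂inv u = t := hΦ₃' t ht
    calc s * t = (s * Φ₁inv u) * Φ₂inv u := by rw [← ht']; ring
      _ ≤ Φ₁inv M * Φ₂inv M := hprod
      _ = Ψ M := rfl
  · -- lower type r for Φ₃
    intro s t hs0 hs1 ht
    set C := max C₁ C₂ with hCdef
    have hC1 : (1:ℝ) ≤ C := le_max_of_le_left hC₁1
    set u := Φ₃ t with hudef
    have hu : 0 ≤ u := hΦ₃nn t ht
    have hsr : (0:ℝ) < s ^ r := Real.rpow_pos_of_pos hs0 _
    set M := C * s ^ r * u with hMdef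
    have hM : 0 ≤ M := by positivity
    refine key (s * t) M (by positivity) hM ?_
    set σ₁ := s ^ (r / p₁) with hσ₁def
    set σ₂ := s ^ (r / p₂) with hσ₂def
    have hσ₁pos : 0 < σ₁ := Real.rpow_pos_of_pos hs0 _
    have hσ₂pos : 0 < σ₂ := Real.rpow_pos_of_pos hs0 _
    have hσ₁le : σ₁ ≤ 1 := Real.rpow_le_one hs0.le hs1 (by positivity)
    have hσ₂le : σ₂ ≤ 1 := Real.rpow_le_one hs0.le hs1 (by positivity)
    have hσ₁p : σ₁ ^ p₁ = s ^ r := by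
      rw [hσ₁def, ← Real.rpow_mul hs0.le, div_mul_cancel₀ _ hp₁.ne']
    have hσ₂p : σ₂ ^ p₂ = s ^ r := by
      rw [hσ₂def, ← Real.rpow_mul hs0.le, div_mul_cancel₀ _ hp₂.ne']
    have claim1 : σ₁ * Φ₁inv u ≤ Φ₁inv M := by
      have h3 := hC₁ σ₁ (Φ₁inv u) hσ₁pos hσ₁le (hinv₁nn u hu)
      rw [(hinv₁ u hu).1, hσ₁p] at h3
      have h3' : Φ₁ (σ₁ * Φ₁inv u) ≤ M := by
        refine le_trans h3 ?_
        rw [hMdef]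
        exact mul_le_mul_of_nonneg_right
          (mul_le_mul_of_nonneg_right (le_max_left _ _) hsr.le) hu
      have h4 := hmono₁' (Set.mem_Ici.mpr (hΦ₁nn _ (mul_nonneg hσ₁pos.le (hinv₁nn u hu))))
        (Set.mem_Ici.mpr hM) h3'
      rwa [(hinv₁ (σ₁ * Φ₁inv u) (mul_nonneg hσ₁pos.le (hinv₁nn u hu))).2] at h4
    have claim2 : σ₂ * Φ₂inv u ≤ Φ₂inv M := by
      have h3 := hC₂ σ₂ (Φ₂inv u) hσ₂pos hσ₂le (hinv₂nn u hu)
      rw [(hinv₂ u hu).1, hσ₂p] at h3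
      have h3' : Φ₂ (σ₂ * Φ₂inv u) ≤ M := by
        refine le_trans h3 ?_
        rw [hMdef]
        exact mul_le_mul_of_nonneg_right
          (mul_le_mul_of_nonneg_right (le_max_right _ _) hsr.le) hu
      have h4 := hmono₂' (Set.mem_Ici.mpr (hΦ₂nn _ (mul_nonneg hσ₂pos.le (hinv₂nn u hu))))
        (Set.mem_Ici.mpr hM) h3'
      rwa [(hinv₂ (σ₂ * Φ₂inv u) (mul_nonneg hσ₂pos.le (hinv₂nn u hu))).2] at h4
    have hσσ : σ₁ * σ₂ = s := by
      rw [hσ₁def, hσ₂def, ← Real.rpow_add hs0, hrmul, Real.rpow_one]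
    have hprod : (σ₁ * Φ₁inv u) * (σ₂ * Φ₂inv u) ≤ Φ₁inv M * Φ₂inv M :=
      mul_le_mul claim1 claim2 (mul_nonneg hσ₂pos.le (hinv₂nn u hu)) (hinv₁nn M hM)
    have ht' : Φ₁inv u * Φ₂inv u = t := hΦ₃' t ht
    calc s * t = (σ₁ * Φ₁inv u) * (σ₂ * Φ₂inv u) := by rw [← hσσ, ← ht']; ring
      _ ≤ Φ₁inv M * Φ₂inv M := hprod
      _ = Ψ M := rfl
end
end
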